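/- For the 1×n grid (path) graph viewed as a wazir graph, the alternating sum Σ_k (−1)^k N_k over dominating sets of size k equals (−1)^{⌈n/2⌉}; but for the 2×2 grid graph (4-cycle C_4), the alternating sum equals 3, showing that the ±1 phenomenon fails for grid graphs. -/

import Mathlib

/-!
If `v` is a pendant vertex with neighbour `w`, toggling `v` pairs off the dominating sets of `G`
with opposite signs, except for the sets `insert v S` where `S` avoids `v` and `w` and dominates
`G - v - w`. Hence `P_G(-1) = -P_{G-v-w}(-1)`. For paths this gives `a (n + 2) = -a n` with
`a 0 = 1` and `a 1 = -1`; the `1 × n` grid is the path on `n` vertices, and the `2 × 2` case is a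
finite check.
-/

/-- `S` is a dominating set: every vertex is in `S` or adjacent to a member of `S`. -/
def IsDomSet {V : Type*} (G : SimpleGraph V) (S : Finset V) : Prop :=
  ∀ v, v ∈ S ∨ ∃ u ∈ S, G.Adj u v

instance {V : Type*} [Fintype V] [DecidableEq V] (G : SimpleGraph V)
    [DecidableRel G.Adj] : DecidablePred (IsDomSet G) :=
  fun _ => inferInstanceAs (Decidable (∀ _, _ ∨ _))


/-- The `m × n` grid (wazir) graph: vertex `p` represents board square
`(p.1.val + 1, p.2.val + 1)`, and `p ~ q` iff `|Δx| + |Δy| = 1`. -/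
def gridGraph (m n : ℕ) : SimpleGraph (Fin m × Fin n) where
  Adj p q := ((p.1.val : ℤ) - q.1.val).natAbs + ((p.2.val : ℤ) - q.2.val).natAbs = 1
  symm := by
    constructor
    intro p q h
    beta_reduce at h ⊢
    rw [show ((q.1.val : ℤ) - p.1.val) = -((p.1.val : ℤ) - q.1.val) by ring,
      show ((q.2.val : ℤ) - p.2.val) = -((p.2.val : ℤ) - q.2.val) by ring,
      Int.natAbs_neg, Int.natAbs_neg]
    exact h
  loopless := by constructor; intro p h; simp at h

instance (m n : ℕ) : DecidableRel (gridGraph m n).Adj :=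
  fun p q => decidable_of_iff
    (((p.1.val : ℤ) - q.1.val).natAbs + ((p.2.val : ℤ) - q.2.val).natAbs = 1) Iff.rfl

open Finset SimpleGraph

theorem sum_powerset_insert_filter_neg_one_pow_card {α : Type*} [DecidableEq α]
    {s : Finset α} {a : α} (ha : a ∉ s) (P : Finset α → Prop) [DecidablePred P]
    (hP : ∀ S, P S → P (insert a S)) :
    ∑ S ∈ (insert a s).powerset.filter P, (-1 : ℤ) ^ S.card =
      -∑ S ∈ s.powerset.filter (fun S => P (insert a S) ∧ ¬P S), (-1 : ℤ) ^ S.card := by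
  rw [sum_filter, sum_powerset_insert ha, sum_filter, ← sum_add_distrib, ← sum_neg_distrib]
  refine sum_congr rfl fun S hSs => ?_
  have haS : a ∉ S := fun h => ha (mem_powerset.1 hSs h)
  rw [card_insert_of_notMem haS, pow_succ]
  by_cases hS : P S
  · simp [hS, hP S hS]
  · by_cases hS' : P (insert a S) <;> simp [hS, hS']

/-- The domination polynomial of `G` evaluated at `-1`. -/
def alternatingDomSum {V : Type*} [Fintype V] [DecidableEq V] (G : SimpleGraph V)
    [DecidableRel G.Adj] : ℤ :=
  ∑ S ∈ univ.filter (IsDomSet G), (-1 : ℤ) ^ S.card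

section Domination

variable {V W : Type*} {G : SimpleGraph V} {H : SimpleGraph W}

def Dominated (G : SimpleGraph V) (S : Finset V) (v : V) : Prop :=
  v ∈ S ∨ ∃ u ∈ S, G.Adj u v

theorem isDomSet_iff_forall_dominated {S : Finset V} : IsDomSet G S ↔ ∀ v, Dominated G S v :=
  Iff.rfl

theorem IsDomSet.mono {S T : Finset V} (h : IsDomSet G S) (hST : S ⊆ T) : IsDomSet G T :=
  fun u => (h u).imp (@hST u) fun ⟨x, hx, hxu⟩ => ⟨x, hST hx, hxu⟩

theorem dominated_map_iff (f : H ↪g G) (T : Finset W) (x : W) :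
    Dominated G (T.map f.toEmbedding) (f x) ↔ Dominated H T x := by
  simp [Dominated]

theorem isDomSet_map_iff (e : G ≃g H) (S : Finset V) :
    IsDomSet H (S.map e.toEquiv.toEmbedding) ↔ IsDomSet G S := by
  rw [isDomSet_iff_forall_dominated, e.surjective.forall]
  exact forall_congr' (dominated_map_iff e.toEmbedding S)

theorem alternatingDomSum_congr [Fintype V] [DecidableEq V] [DecidableRel G.Adj] [Fintype W]
    [DecidableEq W] [DecidableRel H.Adj] (e : G ≃g H) :
    alternatingDomSum G = alternatingDomSum H := by
  rw [alternatingDomSum, alternatingDomSum, sum_filter, sum_filter]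
  refine Fintype.sum_equiv e.toEquiv.finsetCongr _ _ fun S => ?_
  simp [Equiv.finsetCongr_apply, isDomSet_map_iff]

end Domination

section Pendant

variable {V W : Type*} {G : SimpleGraph V} {H : SimpleGraph W} {v w : V}

theorem dominated_insert_iff [DecidableEq V] {S : Finset V} {u : V} :
    Dominated G (insert v S) u ↔ u = v ∨ G.Adj v u ∨ Dominated G S u := by
  simp only [Dominated, mem_insert, exists_eq_or_imp]
  tauto

theorem IsDomSet.of_insert_of_mem_pendant [DecidableEq V] (hv : ∀ u, G.Adj v u ↔ u = w)
    {S : Finset V} (hw : w ∈ S) (h : IsDomSet G (insert v S)) : IsDomSet G S := fun u => by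
  rcases dominated_insert_iff.1 (h u) with rfl | hvu | hu
  · exact Or.inr ⟨w, hw, ((hv w).2 rfl).symm⟩
  · exact Or.inl ((hv u).1 hvu ▸ hw)
  · exact hu

theorem isDomSet_insert_map_iff [DecidableEq V] (hv : ∀ u, G.Adj v u ↔ u = w) (f : H ↪g G)
    (hf : ∀ u, u ∈ Set.range f ↔ u ≠ v ∧ u ≠ w) (T : Finset W) :
    IsDomSet G (insert v (T.map f.toEmbedding)) ↔ IsDomSet H T := by
  refine ⟨fun h x => ?_, fun h u => dominated_insert_iff.2 ?_⟩
  · obtain ⟨hxv, hxw⟩ := (hf (f x)).1 ⟨x, rfl⟩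
    rcases dominated_insert_iff.1 (h (f x)) with hx | hx | hx
    · exact absurd hx hxv
    · exact absurd ((hv _).1 hx) hxw
    · exact (dominated_map_iff f T x).1 hx
  · by_cases huv : u = v
    · exact Or.inl huv
    by_cases huw : u = w
    · exact Or.inr (Or.inl ((hv u).2 huw))
    obtain ⟨x, rfl⟩ := (hf u).2 ⟨huv, huw⟩
    exact Or.inr (Or.inr ((dominated_map_iff f T x).2 (h x)))

theorem not_isDomSet_map (hv : ∀ u, G.Adj v u ↔ u = w) (f : H ↪g G)
    (hf : ∀ u, u ∈ Set.range f ↔ u ≠ v ∧ u ≠ w) (T : Finset W) :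
    ¬IsDomSet G (T.map f.toEmbedding) := by
  intro h
  rcases h v with hvT | ⟨u, hu, huv⟩
  · exact ((hf v).1 (coe_map_subset_range _ T hvT)).1 rfl
  · exact ((hf u).1 (coe_map_subset_range _ T hu)).2 ((hv u).1 huv.symm)

theorem alternatingDomSum_eq_neg_of_pendant [Fintype V] [DecidableEq V] [DecidableRel G.Adj]
    [Fintype W] [DecidableEq W] [DecidableRel H.Adj] (hv : ∀ u, G.Adj v u ↔ u = w)
    (f : H ↪g G) (hf : ∀ u, u ∈ Set.range f ↔ u ≠ v ∧ u ≠ w) :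
    alternatingDomSum G = -alternatingDomSum H := by
  have hfilter :
      (univ.erase v).powerset.filter (fun S => IsDomSet G (insert v S) ∧ ¬IsDomSet G S) =
        (univ.filter (IsDomSet H)).map (mapEmbedding f.toEmbedding).toEmbedding := by
    ext S
    simp only [mem_filter, mem_powerset, mem_map, mem_univ, true_and, subset_erase, subset_univ]
    constructor
    · rintro ⟨hSv, hdom, hndom⟩
      have hwS : w ∉ S := fun hw => hndom (hdom.of_insert_of_mem_pendant hv hw)
      have hSf : S ⊆ univ.map f.toEmbedding := fun u hu => mem_map.2 <| by
        simpa using (hf u).2 ⟨ne_of_mem_of_not_mem hu hSv, ne_of_mem_of_not_mem hu hwS⟩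
      obtain ⟨T, -, rfl⟩ := subset_map_iff.1 hSf
      exact ⟨T, (isDomSet_insert_map_iff hv f hf T).1 hdom, rfl⟩
    · rintro ⟨T, hT, rfl⟩
      exact ⟨fun hvT => ((hf v).1 (coe_map_subset_range _ T hvT)).1 rfl,
        (isDomSet_insert_map_iff hv f hf T).2 hT, not_isDomSet_map hv f hf T⟩
  have htoggle := sum_powerset_insert_filter_neg_one_pow_card (notMem_erase v univ)
    (IsDomSet G) fun S h => h.mono (subset_insert v S)
  rw [insert_erase (mem_univ v), powerset_univ, hfilter, sum_map] at htoggle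
  simpa [alternatingDomSum] using htoggle

end Pendant

section Path

instance (n : ℕ) : DecidableRel (pathGraph n).Adj :=
  fun _ _ => decidable_of_iff _ pathGraph_adj.symm

def pathGraphAddNat (n m : ℕ) : pathGraph n ↪g pathGraph (n + m) where
  toEmbedding := Fin.addNatEmb m
  map_rel_iff' := by
    intro u v
    simp only [Fin.addNatEmb_apply, pathGraph_adj, Fin.val_addNat]
    omega

theorem mem_range_pathGraphAddNat {n m : ℕ} {u : Fin (n + m)} :
    u ∈ Set.range (pathGraphAddNat n m) ↔ m ≤ u.val := by
  refine ⟨?_, fun h => ⟨⟨u - m, by omega⟩, Fin.ext (Nat.sub_add_cancel h)⟩⟩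
  rintro ⟨x, rfl⟩
  exact Nat.le_add_left m x

theorem alternatingDomSum_pathGraph_add_two (n : ℕ) :
    alternatingDomSum (pathGraph (n + 2)) = -alternatingDomSum (pathGraph n) := by
  refine alternatingDomSum_eq_neg_of_pendant (v := 0) (w := 1) (fun u => ?_) (pathGraphAddNat n 2)
    fun u => ?_
  · rw [pathGraph_adj, Fin.ext_iff, Fin.val_zero, Fin.val_one]
    omega
  · rw [mem_range_pathGraphAddNat, ne_eq, ne_eq, Fin.ext_iff, Fin.ext_iff, Fin.val_zero,
      Fin.val_one]
    omega

theorem alternatingDomSum_pathGraph : ∀ n : ℕ,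
    alternatingDomSum (pathGraph n) = (-1 : ℤ) ^ ((n + 1) / 2)
  | 0 => by decide
  | 1 => by decide
  | n + 2 => by
    rw [alternatingDomSum_pathGraph_add_two, alternatingDomSum_pathGraph n,
      show (n + 2 + 1) / 2 = (n + 1) / 2 + 1 by omega, pow_succ, mul_neg_one]

end Path

def gridGraphOneIsoPathGraph (n : ℕ) : gridGraph 1 n ≃g pathGraph n where
  toEquiv := Equiv.uniqueProd (Fin n) (Fin 1)
  map_rel_iff' := by
    intro p q
    simp only [Equiv.coe_uniqueProd, pathGraph_adj, gridGraph, Fin.val_eq_zero,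
      CharP.cast_eq_zero, sub_self, Int.natAbs_zero, zero_add]
    omega

/-- For the `1 × n` grid (path) graph the alternating sum `Σ_k (-1)^k N_k` over
dominating sets equals `(-1)^⌈n/2⌉`, but for the `2 × 2` grid graph (the 4-cycle)
it equals `3`: the `±1` phenomenon fails for grid graphs. -/
theorem grid_alternating_sums :
    (∀ n : ℕ, 1 ≤ n →
      ∑ S ∈ Finset.univ.filter (IsDomSet (gridGraph 1 n)), (-1 : ℤ) ^ S.card =
        (-1 : ℤ) ^ ((n + 1) / 2)) ∧
    ∑ S ∈ Finset.univ.filter (IsDomSet (gridGraph 2 2)), (-1 : ℤ) ^ S.card = 3 :=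
  ⟨fun n _ => (alternatingDomSum_congr (gridGraphOneIsoPathGraph n)).trans
    (alternatingDomSum_pathGraph n), by decide⟩
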